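/- For n ≥ 3, N(n;(3)) := Σ_{λ⊢n} f^{λ/(3)} = (1/6)(t_n + 2·t_{n−3}), where t_m is the number of involutions in S_m. -/

import Mathlib

/-!
Write `N_k(α)` for the number of saturated chains `α ⋖ ⋯ ⋖ μ` of length `k` in Young's lattice, so
that `N(n; α) = N_{n - |α|}(α)`. Every diagram has exactly one more addable than removable corner,
and two distinct diagrams of the same size have a common upper cover iff they have a common lower
cover; i.e. Young's lattice is a differential poset, `DU - UD = I`. Commuting the last up-step of a
chain past the earlier ones with this relation gives
`N_{k+1}(α) = N_k(α) + ∑_{β ⋖ α} N_k(β) + k N_{k-1}(α)`.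
For `α = ∅` this is the involution recurrence `t_{k+1} = t_k + k t_{k-1}`, and feeding in the rows
`(1)`, `(2)`, `(3)` one after another gives `N_k((1)) = t_{k+1}`, `2 N_k((2)) = t_{k+2}` and
`6 N_k((3)) = t_{k+3} + 2 t_k`.
-/

open Finset

/-- `invol n` = number of involutions in the symmetric group `S_n` (permutations `σ` with `σ² = 1`). -/
noncomputable def invol (n : ℕ) : ℕ := Nat.card {σ : Equiv.Perm (Fin n) // σ * σ = 1}

/-- `skewSYT lam alp` = the number `f^{λ/α}` of standard Young tableaux of skew shape `λ/α`,
encoded as saturated chains of Young diagrams from `α` to `λ` adding one cell at a time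
(zero if `α ⊄ λ`). -/
noncomputable def skewSYT (lam alp : YoungDiagram) : ℕ :=
  Nat.card {f : Fin (lam.card - alp.card + 1) → YoungDiagram //
    f 0 = alp ∧ f (Fin.last _) = lam ∧
    ∀ i : Fin (lam.card - alp.card),
      f i.castSucc ≤ f i.succ ∧ (f i.succ).card = (f i.castSucc).card + 1}

/-- `NN n α = N(n;α) = Σ_{λ ⊢ n} f^{λ/α}`. -/
noncomputable def NN (n : ℕ) (alp : YoungDiagram) : ℕ :=
  ∑ᶠ lam ∈ {μ : YoungDiagram | μ.card = n}, skewSYT lam alp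

/-- the single-row Young diagram with `k` cells -/
def rowYD (k : ℕ) : YoungDiagram := YoungDiagram.ofRowLens [k] (List.sortedGE_iff_pairwise.mpr (List.pairwise_singleton _ k))

theorem natCard_subtype_eq_sum_natCard_fiber {X Y : Type*} [Fintype Y] [Finite X]
    (p : X → Prop) (f : X → Y) : Nat.card {x // p x} = ∑ y, Nat.card {x // p x ∧ f x = y} := by
  rw [← Nat.card_sigma, Nat.card_congr ((Equiv.sigmaFiberEquiv fun x : {x // p x} => f x).symm)]
  exact Nat.card_congr (Equiv.sigmaCongrRight fun y =>
    Equiv.subtypeSubtypeEquivSubtypeInter p (fun x => f x = y))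

namespace Equiv.Perm

variable {α β : Type*}

theorem optionCongr_mul (e f : Perm α) : (e * f).optionCongr = e.optionCongr * f.optionCongr := by
  simp only [mul_def, optionCongr_trans]

theorem permCongr_mul_self_eq_one_iff (e : α ≃ β) (σ : Perm α) :
    e.permCongr σ * e.permCongr σ = 1 ↔ σ * σ = 1 := by
  rw [← permCongrHom_coe, ← map_mul, MulEquiv.map_eq_one_iff]

theorem natCard_involutions_congr (e : α ≃ β) :
    Nat.card {σ : Perm α // σ * σ = 1} = Nat.card {τ : Perm β // τ * τ = 1} :=
  Nat.card_congr <| e.permCongr.subtypeEquiv fun σ => (permCongr_mul_self_eq_one_iff e σ).symm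

theorem natCard_involutions_fixing_congr (e : α ≃ β) (x : α) :
    Nat.card {σ : Perm α // σ * σ = 1 ∧ σ x = x} =
      Nat.card {τ : Perm β // τ * τ = 1 ∧ τ (e x) = e x} :=
  Nat.card_congr <| e.permCongr.subtypeEquiv fun σ =>
    and_congr (permCongr_mul_self_eq_one_iff e σ).symm (by simp [permCongr_apply])

variable [DecidableEq α]

/-- `Perm.decomposeOption` writes `σ` as `swap none a * e.optionCongr`; this is when that is an
involution. -/
theorem swap_mul_optionCongr_mul_self_eq_one_iff (a : Option α) (e : Perm α) :
    swap none a * e.optionCongr * (swap none a * e.optionCongr) = 1 ↔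
      e * e = 1 ∧ ∀ x ∈ a, e x = x := by
  have involutive_of_commute (h : ∀ x ∈ a, e x = x) :
      swap none a * e.optionCongr * (swap none a * e.optionCongr) = (e * e).optionCongr := by
    have hcomm : e.optionCongr * swap none a = swap none a * e.optionCongr := by
      rw [mul_swap_eq_swap_mul]
      cases a <;> simp_all
    rw [mul_assoc, ← mul_assoc e.optionCongr, hcomm, ← mul_assoc, ← mul_assoc, swap_mul_self,
      one_mul, optionCongr_mul]
  constructor
  · intro h
    have hfix : ∀ x ∈ a, e x = x := by
      rintro x rfl
      simpa [swap_apply_eq_iff] using congrArg (· none) h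
    refine ⟨optionCongr_injective ?_, hfix⟩
    rw [← involutive_of_commute hfix, h, optionCongr_one]
  · rintro ⟨h, hfix⟩
    rw [involutive_of_commute hfix, h, optionCongr_one]

def involutionsOptionFiberEquiv (a : Option α) :
    {σ : Perm (Option α) // σ * σ = 1 ∧ σ none = a} ≃
      {e : Perm α // e * e = 1 ∧ ∀ x ∈ a, e x = x} where
  toFun σ := ⟨removeNone σ.1, by
    obtain ⟨σ, hσ, rfl⟩ := σ
    rw [← swap_mul_optionCongr_mul_self_eq_one_iff, map_equiv_removeNone]
    simpa only [← mul_assoc, swap_mul_self, one_mul] using hσ⟩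
  invFun e := ⟨swap none a * e.1.optionCongr,
    (swap_mul_optionCongr_mul_self_eq_one_iff a e.1).2 e.2, by simp⟩
  left_inv σ := Subtype.ext <| by
    simp only [map_equiv_removeNone, ← mul_assoc, σ.2.2, swap_mul_self, one_mul]
  right_inv e := Subtype.ext <|
    congrArg Prod.snd (decomposeOption.apply_symm_apply (a, e.1))

end Equiv.Perm

section Involutions

open Equiv Equiv.Perm

theorem invol_zero : invol 0 = 1 := by
  simp [invol]

theorem invol_one : invol 1 = 1 := by
  simp [invol]

theorem invol_eq_natCard_involutions_fixing (n : ℕ) (x : Fin (n + 1)) :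
    invol n = Nat.card {σ : Perm (Fin (n + 1)) // σ * σ = 1 ∧ σ x = x} := by
  rw [natCard_involutions_fixing_congr (finSuccEquiv' x), finSuccEquiv'_at,
    Nat.card_congr (involutionsOptionFiberEquiv none), invol]
  simp

theorem invol_add_two (n : ℕ) : invol (n + 2) = invol (n + 1) + (n + 1) * invol n := by
  rw [invol, natCard_involutions_congr (finSuccEquiv (n + 1)),
    natCard_subtype_eq_sum_natCard_fiber _ (fun σ => σ none), Fintype.sum_option]
  simp only [Nat.card_congr (involutionsOptionFiberEquiv _), Option.mem_def, reduceCtorEq,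
    false_imp_iff, forall_const, and_true, Option.some.injEq, forall_eq']
  simp only [← invol_eq_natCard_involutions_fixing, sum_const, card_univ, Fintype.card_fin,
    smul_eq_mul, invol]

end Involutions

noncomputable section

open scoped Classical

namespace YoungDiagram

variable {μ ν ρ : YoungDiagram}

theorem card_le_card_of_le (h : μ ≤ ν) : μ.card ≤ ν.card :=
  card_le_card (cells_subset_iff.2 h)

theorem eq_of_le_of_card_le (h : μ ≤ ν) (hc : ν.card ≤ μ.card) : μ = ν :=
  YoungDiagram.ext (eq_of_subset_of_card_le (cells_subset_iff.2 h) hc)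

theorem card_sup_add_card_inf (μ ν : YoungDiagram) :
    (μ ⊔ ν).card + (μ ⊓ ν).card = μ.card + ν.card := by
  simp only [YoungDiagram.card, cells_sup, cells_inf, card_union_add_card_inter]

theorem cells_subset_range_product_range (μ : YoungDiagram) :
    μ.cells ⊆ range μ.card ×ˢ range μ.card := by
  rintro ⟨i, j⟩ hij
  rw [mem_cells, mem_iff_lt_rowLen] at hij
  have hcol : i < μ.colLen j := mem_iff_lt_colLen.1 (mem_iff_lt_rowLen.2 hij)
  have hrow : μ.rowLen i ≤ μ.card := rowLen_eq_card μ ▸ card_filter_le _ _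
  have hcol' : μ.colLen j ≤ μ.card := colLen_eq_card μ ▸ card_filter_le _ _
  simp only [mem_product, mem_range]
  omega

theorem finite_setOf_card_eq (n : ℕ) : {μ : YoungDiagram | μ.card = n}.Finite := by
  have hinj : Function.Injective (cells : YoungDiagram → Finset (ℕ × ℕ)) :=
    fun _ _ => YoungDiagram.ext
  refine ((range n ×ˢ range n).powerset.finite_toSet.preimage hinj.injOn).subset ?_
  rintro μ rfl
  exact mem_powerset.2 (cells_subset_range_product_range μ)

def ofCard (n : ℕ) : Finset YoungDiagram := (finite_setOf_card_eq n).toFinset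

@[simp] theorem mem_ofCard {n : ℕ} : μ ∈ ofCard n ↔ μ.card = n := by simp [ofCard]

def CellCovBy (μ ν : YoungDiagram) : Prop := μ ≤ ν ∧ ν.card = μ.card + 1

def upperCovers (μ : YoungDiagram) : Finset YoungDiagram :=
  (ofCard (μ.card + 1)).filter (CellCovBy μ)

def lowerCovers (μ : YoungDiagram) : Finset YoungDiagram :=
  (ofCard (μ.card - 1)).filter (CellCovBy · μ)

@[simp] theorem mem_upperCovers : ν ∈ upperCovers μ ↔ CellCovBy μ ν := by
  simp +contextual [upperCovers, CellCovBy]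

@[simp] theorem mem_lowerCovers : ρ ∈ lowerCovers μ ↔ CellCovBy ρ μ := by
  simp only [lowerCovers, mem_filter, mem_ofCard, and_iff_right_iff_imp]
  rintro ⟨-, h⟩
  omega

theorem lowerCovers_eq_empty_of_card_eq_zero (h : μ.card = 0) : lowerCovers μ = ∅ := by
  ext ρ
  simp [CellCovBy, h]

theorem rowLen_eq_of_forall_mem_iff {i m : ℕ} (h : ∀ j, (i, j) ∈ μ ↔ j < m) :
    μ.rowLen i = m := by
  have h₁ : ¬μ.rowLen i < m := (h _).not.1 (by simp [mem_iff_lt_rowLen])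
  have h₂ : ¬m < μ.rowLen i := fun hm => lt_irrefl m ((h m).1 (mem_iff_lt_rowLen.2 hm))
  omega

/-- The hypothesis says that row `i` stays no longer than row `i - 1` after adding a cell. -/
def addCell (μ : YoungDiagram) (i : ℕ) (h : i = 0 ∨ μ.rowLen i < μ.rowLen (i - 1)) :
    YoungDiagram where
  cells := insert (i, μ.rowLen i) μ.cells
  isLowerSet := by
    rintro ⟨a', b'⟩ ⟨a, b⟩ hle hmem
    obtain ⟨ha, hb⟩ := Prod.mk_le_mk.1 hle
    simp only [coe_insert, Set.mem_insert_iff, Prod.mk.injEq, mem_coe, mem_cells,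
      mem_iff_lt_rowLen] at hmem ⊢
    have hanti : μ.rowLen a' ≤ μ.rowLen a := μ.rowLen_anti _ _ ha
    rcases hmem with ⟨rfl, rfl⟩ | hmem
    · rcases ha.lt_or_eq with ha | rfl
      · have := μ.rowLen_anti a (a' - 1) (by omega)
        omega
      · omega
    · omega

theorem mem_addCell {i : ℕ} {h} {c : ℕ × ℕ} :
    c ∈ addCell μ i h ↔ c = (i, μ.rowLen i) ∨ c ∈ μ := by
  rw [← mem_cells]
  simp [addCell]

theorem cellCovBy_addCell (μ : YoungDiagram) (i : ℕ) (h) : CellCovBy μ (addCell μ i h) := by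
  refine ⟨fun c hc => mem_addCell.2 (Or.inr hc), card_insert_of_notMem ?_⟩
  simp [mem_iff_lt_rowLen]

theorem rowLen_addCell {i : ℕ} {h} (i' : ℕ) :
    (addCell μ i h).rowLen i' = if i' = i then μ.rowLen i + 1 else μ.rowLen i' := by
  apply rowLen_eq_of_forall_mem_iff
  intro j
  rw [mem_addCell, Prod.mk.injEq, mem_iff_lt_rowLen]
  split_ifs with hi
  · subst hi
    omega
  · omega

theorem eq_of_addCell_eq {i i' : ℕ} {h h'} (he : addCell μ i h = addCell μ i' h') : i = i' := by
  have := congrArg (·.rowLen i) he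
  simp only [rowLen_addCell] at this
  split_ifs at this <;> omega

theorem CellCovBy.exists_eq_addCell (hμν : CellCovBy μ ν) :
    ∃ i h, ν = addCell μ i h := by
  obtain ⟨⟨i, j⟩, hc, hins⟩ := exists_eq_insert_iff.2 ⟨cells_subset_iff.2 hμν.1, hμν.2.symm⟩
  have hcν : (i, j) ∈ ν := by simp [← mem_cells, ← hins]
  have mem_of_lt : ∀ d ≤ (i, j), d ≠ (i, j) → d ∈ μ := fun d hd hne => by
    have := ν.isLowerSet hd hcν
    rw [mem_coe, ← hins, mem_insert] at this
    exact (mem_cells _).1 (this.resolve_left hne)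
  rw [mem_cells, mem_iff_lt_rowLen] at hc
  have hj : j = μ.rowLen i := by
    rcases Nat.eq_zero_or_pos j with rfl | hj
    · omega
    · have := mem_iff_lt_rowLen.1 (mem_of_lt (i, j - 1) ⟨le_rfl, by simp⟩
        (by simp only [ne_eq, Prod.mk.injEq, true_and]; omega))
      omega
  have h : i = 0 ∨ μ.rowLen i < μ.rowLen (i - 1) := by
    refine or_iff_not_imp_left.2 fun hi => ?_
    have := mem_iff_lt_rowLen.1 (mem_of_lt (i - 1, j) ⟨by simp, le_rfl⟩
      (by simp only [ne_eq, Prod.mk.injEq, and_true]; omega))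
    omega
  exact ⟨i, h, YoungDiagram.ext (by rw [← hins, hj]; rfl)⟩

theorem eq_of_forall_rowLen_eq (h : ∀ i, μ.rowLen i = ν.rowLen i) : μ = ν :=
  SetLike.ext fun ⟨i, j⟩ => by rw [mem_iff_lt_rowLen, mem_iff_lt_rowLen, h]

def removeCell (μ : YoungDiagram) (i : ℕ) (h : μ.rowLen (i + 1) < μ.rowLen i) :
    YoungDiagram where
  cells := μ.cells.erase (i, μ.rowLen i - 1)
  isLowerSet := by
    rintro ⟨a', b'⟩ ⟨a, b⟩ hle hmem
    obtain ⟨ha, hb⟩ := Prod.mk_le_mk.1 hle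
    simp only [coe_erase, Set.mem_sdiff, mem_coe, mem_cells, Set.mem_singleton_iff,
      Prod.mk.injEq, mem_iff_lt_rowLen] at hmem ⊢
    obtain ⟨hmem, hne⟩ := hmem
    have hanti : μ.rowLen a' ≤ μ.rowLen a := μ.rowLen_anti _ _ ha
    refine ⟨by omega, fun ⟨hai, hbi⟩ => ?_⟩
    subst hai
    rcases ha.lt_or_eq with ha | rfl
    · have := μ.rowLen_anti (a + 1) a' ha
      omega
    · omega

theorem mem_removeCell {i : ℕ} {h} {c : ℕ × ℕ} :
    c ∈ removeCell μ i h ↔ c ≠ (i, μ.rowLen i - 1) ∧ c ∈ μ := by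
  rw [← mem_cells]
  simp [removeCell]

theorem cellCovBy_removeCell (μ : YoungDiagram) (i : ℕ) (h) :
    CellCovBy (removeCell μ i h) μ := by
  have hmem : (i, μ.rowLen i - 1) ∈ μ.cells := (mem_cells _).2 (mem_iff_lt_rowLen.2 (by omega))
  exact ⟨fun c hc => (mem_removeCell.1 hc).2,
    (Nat.succ_pred_eq_of_pos (card_pos.2 ⟨_, hmem⟩)).symm.trans
      (congrArg (· + 1) (card_erase_of_mem hmem).symm)⟩

theorem rowLen_removeCell {i : ℕ} {h} (i' : ℕ) :
    (removeCell μ i h).rowLen i' = if i' = i then μ.rowLen i - 1 else μ.rowLen i' := by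
  apply rowLen_eq_of_forall_mem_iff
  intro j
  rw [mem_removeCell, ne_eq, Prod.mk.injEq, mem_iff_lt_rowLen]
  split_ifs with hi
  · subst hi
    omega
  · omega

def addableRows (μ : YoungDiagram) : Finset ℕ :=
  (range (μ.colLen 0 + 1)).filter fun i => i = 0 ∨ μ.rowLen i < μ.rowLen (i - 1)

def removableRows (μ : YoungDiagram) : Finset ℕ :=
  (range (μ.colLen 0)).filter fun i => μ.rowLen (i + 1) < μ.rowLen i

theorem lt_colLen_zero_of_rowLen_pos {i : ℕ} (h : 0 < μ.rowLen i) : i < μ.colLen 0 :=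
  mem_iff_lt_colLen.1 (mem_iff_lt_rowLen.2 h)

theorem card_addableRows (μ : YoungDiagram) :
    #(addableRows μ) = #(removableRows μ) + 1 := by
  have : addableRows μ = insert 0 ((removableRows μ).map ⟨(· + 1), add_left_injective 1⟩) := by
    ext (_ | i) <;> simp [addableRows, removableRows]
  rw [this, card_insert_of_notMem (by simp), card_map]

theorem card_upperCovers_eq_card_addableRows (μ : YoungDiagram) :
    #(upperCovers μ) = #(addableRows μ) := by
  symm
  refine card_bij (fun i hi => addCell μ i (mem_filter.1 hi).2)
    (fun i _ => mem_upperCovers.2 (cellCovBy_addCell μ i _))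
    (fun i _ i' _ he => eq_of_addCell_eq he) fun ν hν => ?_
  obtain ⟨i, h, rfl⟩ := (mem_upperCovers.1 hν).exists_eq_addCell
  refine ⟨i, mem_filter.2 ⟨mem_range.2 ?_, h⟩, rfl⟩
  rcases h with rfl | h
  · omega
  · have := lt_colLen_zero_of_rowLen_pos (Nat.zero_lt_of_lt h)
    omega

theorem card_lowerCovers_eq_card_removableRows (μ : YoungDiagram) :
    #(lowerCovers μ) = #(removableRows μ) := by
  symm
  refine card_bij (fun i hi => removeCell μ i (mem_filter.1 hi).2)
    (fun i _ => mem_lowerCovers.2 (cellCovBy_removeCell μ i _))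
    (fun i hi i' _ he => ?_) fun ρ hρ => ?_
  · have hrem := (mem_filter.1 hi).2
    have := congrArg (·.rowLen i) he
    simp only [rowLen_removeCell] at this
    split_ifs at this <;> omega
  · obtain ⟨i, h, rfl⟩ := (mem_lowerCovers.1 hρ).exists_eq_addCell
    have hrem : (addCell ρ i h).rowLen (i + 1) < (addCell ρ i h).rowLen i := by
      rw [rowLen_addCell, rowLen_addCell, if_neg (by omega), if_pos rfl]
      have := ρ.rowLen_anti i (i + 1) (by omega)
      omega
    refine ⟨i, mem_filter.2 ⟨mem_range.2 (lt_colLen_zero_of_rowLen_pos (by omega)), hrem⟩,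
      eq_of_forall_rowLen_eq fun i' => ?_⟩
    rcases eq_or_ne i' i with rfl | hi
    · simp [rowLen_removeCell, rowLen_addCell]
    · simp [rowLen_removeCell, rowLen_addCell, hi]

theorem card_upperCovers (μ : YoungDiagram) : #(upperCovers μ) = #(lowerCovers μ) + 1 := by
  rw [card_upperCovers_eq_card_addableRows, card_lowerCovers_eq_card_removableRows,
    card_addableRows]

theorem card_lt_card_sup_of_ne (hc : ν.card = ρ.card) (hne : ν ≠ ρ) :
    ρ.card < (ρ ⊔ ν).card := by
  refine (card_le_card_of_le le_sup_left).lt_of_ne fun h => hne ?_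
  have hsup := eq_of_le_of_card_le (le_sup_left : ρ ≤ ρ ⊔ ν) h.ge
  exact eq_of_le_of_card_le (hsup ▸ le_sup_right) hc.ge

theorem card_inf_lt_card_of_ne (hc : ν.card = ρ.card) (hne : ν ≠ ρ) :
    (ρ ⊓ ν).card < ρ.card := by
  refine (card_le_card_of_le inf_le_left).lt_of_ne fun h => hne ?_
  have hinf := eq_of_le_of_card_le (inf_le_left : ρ ⊓ ν ≤ ρ) h.ge
  exact (eq_of_le_of_card_le (hinf ▸ inf_le_right) hc.le).symm

theorem card_upperCovers_inter_of_ne (hc : ν.card = ρ.card) (hne : ν ≠ ρ) :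
    #(upperCovers ρ ∩ upperCovers ν) = if (ρ ⊔ ν).card = ρ.card + 1 then 1 else 0 := by
  have hlt := card_lt_card_sup_of_ne hc hne
  have hmem : ∀ μ, μ ∈ upperCovers ρ ∩ upperCovers ν ↔
      μ = ρ ⊔ ν ∧ (ρ ⊔ ν).card = ρ.card + 1 := fun μ => by
    simp only [mem_inter, mem_upperCovers, CellCovBy]
    constructor
    · rintro ⟨⟨hρμ, hμ⟩, hνμ, -⟩
      have hle := sup_le hρμ hνμ
      have := card_le_card_of_le hle
      exact ⟨(eq_of_le_of_card_le hle (by omega)).symm, by omega⟩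
    · rintro ⟨rfl, h⟩
      exact ⟨⟨le_sup_left, h⟩, le_sup_right, by omega⟩
  split_ifs with h
  · exact card_eq_one.2 ⟨_, eq_singleton_iff_unique_mem.2 ⟨(hmem _).2 ⟨rfl, h⟩,
      fun μ hμ => ((hmem μ).1 hμ).1⟩⟩
  · exact card_eq_zero.2 (eq_empty_of_forall_notMem fun μ hμ => h ((hmem μ).1 hμ).2)

theorem card_lowerCovers_inter_of_ne (hc : ν.card = ρ.card) (hne : ν ≠ ρ) :
    #(lowerCovers ρ ∩ lowerCovers ν) = if (ρ ⊓ ν).card + 1 = ρ.card then 1 else 0 := by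
  have hlt := card_inf_lt_card_of_ne hc hne
  have hmem : ∀ σ, σ ∈ lowerCovers ρ ∩ lowerCovers ν ↔
      σ = ρ ⊓ ν ∧ (ρ ⊓ ν).card + 1 = ρ.card := fun σ => by
    simp only [mem_inter, mem_lowerCovers, CellCovBy]
    constructor
    · rintro ⟨⟨hσρ, hρ⟩, hσν, -⟩
      have hle := le_inf hσρ hσν
      have := card_le_card_of_le hle
      exact ⟨eq_of_le_of_card_le hle (by omega), by omega⟩
    · rintro ⟨rfl, h⟩
      exact ⟨⟨inf_le_left, h.symm⟩, inf_le_right, by omega⟩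
  split_ifs with h
  · exact card_eq_one.2 ⟨_, eq_singleton_iff_unique_mem.2 ⟨(hmem _).2 ⟨rfl, h⟩,
      fun σ hσ => ((hmem σ).1 hσ).1⟩⟩
  · exact card_eq_zero.2 (eq_empty_of_forall_notMem fun σ hσ => h ((hmem σ).1 hσ).2)

/-- Young's lattice is a differential poset: `DU - UD = I`, counted pairwise. -/
theorem card_upperCovers_inter (hc : ν.card = ρ.card) :
    #(upperCovers ρ ∩ upperCovers ν) =
      #(lowerCovers ρ ∩ lowerCovers ν) + if ν = ρ then 1 else 0 := by
  split_ifs with hne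
  · subst hne
    simpa using card_upperCovers ν
  · have := card_sup_add_card_inf ρ ν
    rw [card_upperCovers_inter_of_ne hc hne, card_lowerCovers_inter_of_ne hc hne]
    split_ifs <;> omega

theorem sum_upperCovers_sum_lowerCovers (f : YoungDiagram → ℕ) (ρ : YoungDiagram) :
    ∑ μ ∈ upperCovers ρ, ∑ ν ∈ lowerCovers μ, f ν =
      f ρ + ∑ σ ∈ lowerCovers ρ, ∑ ν ∈ upperCovers σ, f ν := by
  have hUD : ∑ μ ∈ upperCovers ρ, ∑ ν ∈ lowerCovers μ, f ν =
      ∑ ν ∈ ofCard ρ.card, #(upperCovers ρ ∩ upperCovers ν) * f ν := by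
    simp only [← smul_eq_mul, ← sum_const]
    refine sum_comm' fun μ ν => ?_
    simp only [mem_inter, mem_upperCovers, mem_lowerCovers, mem_ofCard]
    exact ⟨fun ⟨hρμ, hνμ⟩ => ⟨⟨hρμ, hνμ⟩, by rw [← add_left_inj 1, ← hρμ.2, hνμ.2]⟩,
      And.left⟩
  have hDU : ∑ σ ∈ lowerCovers ρ, ∑ ν ∈ upperCovers σ, f ν =
      ∑ ν ∈ ofCard ρ.card, #(lowerCovers ρ ∩ lowerCovers ν) * f ν := by
    simp only [← smul_eq_mul, ← sum_const]
    refine sum_comm' fun σ ν => ?_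
    simp only [mem_inter, mem_upperCovers, mem_lowerCovers, mem_ofCard]
    exact ⟨fun ⟨hσρ, hσν⟩ => ⟨⟨hσρ, hσν⟩, by rw [hσρ.2, hσν.2]⟩, And.left⟩
  have hρ : f ρ = ∑ ν ∈ ofCard ρ.card, if ν = ρ then f ν else 0 := by simp
  rw [hUD, hDU, add_comm, hρ, ← sum_add_distrib]
  refine sum_congr rfl fun ν hν => ?_
  rw [card_upperCovers_inter (mem_ofCard.1 hν), add_mul, boole_mul]

/-- Saturated chains `α = f 0 ⋖ f 1 ⋖ ⋯ ⋖ f k = μ`, i.e. standard fillings of `μ / α`. -/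
def CoverChain (k : ℕ) (α μ : YoungDiagram) : Type :=
  {f : Fin (k + 1) → YoungDiagram //
    f 0 = α ∧ f (Fin.last k) = μ ∧ ∀ i : Fin k, CellCovBy (f i.castSucc) (f i.succ)}

instance (α μ : YoungDiagram) : Subsingleton (CoverChain 0 α μ) :=
  ⟨fun f g => Subtype.ext <| funext fun i => by
    rw [Fin.fin_one_eq_zero i, f.2.1, g.2.1]⟩

theorem isEmpty_coverChain_zero {α μ : YoungDiagram} (h : μ ≠ α) :
    IsEmpty (CoverChain 0 α μ) :=
  ⟨fun f => h (f.2.2.1.symm.trans f.2.1)⟩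

def coverChainSuccEquiv (k : ℕ) (α μ : YoungDiagram) :
    CoverChain (k + 1) α μ ≃ Σ ν : lowerCovers μ, CoverChain k α ν where
  toFun f :=
    ⟨⟨f.1 (Fin.last k).castSucc, mem_lowerCovers.2 <| by
        simpa only [Fin.succ_last, f.2.2.1] using f.2.2.2 (Fin.last k)⟩,
      ⟨Fin.init f.1, f.2.1, rfl, fun i => by simpa [Fin.init] using f.2.2.2 i.castSucc⟩⟩
  invFun g :=
    ⟨Fin.snoc g.2.1 μ,
      (Fin.snoc_castSucc (α := fun _ => YoungDiagram) μ g.2.1 0).trans g.2.2.1,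
      Fin.snoc_last _ _, Fin.lastCases (by simpa [g.2.2.2.1] using mem_lowerCovers.1 g.1.2)
        fun i => by simpa only [Fin.succ_castSucc, Fin.snoc_castSucc] using g.2.2.2.2 i⟩
  left_inv f := Subtype.ext <| by simp [← f.2.2.1]
  right_inv := by
    rintro ⟨⟨ν, hν⟩, g, hg₀, hgk, hg⟩
    obtain rfl : Fin.snoc (α := fun _ => YoungDiagram) g μ (Fin.last k).castSucc = ν :=
      (Fin.snoc_castSucc ..).trans hgk
    exact Sigma.ext rfl
      (heq_of_eq (Subtype.ext (Fin.init_snoc (α := fun _ => YoungDiagram) μ g)))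

instance finite_coverChain (k : ℕ) (α μ : YoungDiagram) : Finite (CoverChain k α μ) := by
  induction k generalizing μ with
  | zero => infer_instance
  | succ k ih => exact Finite.of_equiv _ (coverChainSuccEquiv k α μ).symm

def numChains (k : ℕ) (α μ : YoungDiagram) : ℕ := Nat.card (CoverChain k α μ)

theorem numChains_zero (α μ : YoungDiagram) : numChains 0 α μ = if μ = α then 1 else 0 := by
  split_ifs with h
  · subst h
    exact Nat.card_eq_one_iff_unique.2 ⟨inferInstance, ⟨⟨fun _ => μ, rfl, rfl, nofun⟩⟩⟩
  · have := isEmpty_coverChain_zero h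
    exact Nat.card_of_isEmpty

theorem numChains_succ (k : ℕ) (α μ : YoungDiagram) :
    numChains (k + 1) α μ = ∑ ν ∈ lowerCovers μ, numChains k α ν := by
  rw [numChains, Nat.card_congr (coverChainSuccEquiv k α μ), Nat.card_sigma,
    ← sum_coe_sort (lowerCovers μ)]
  rfl

/-- `k` applications of `DU = UD + I` move an up-step from the end of a chain to its start. -/
theorem sum_numChains_upperCovers (k : ℕ) (α ρ : YoungDiagram) :
    ∑ μ ∈ upperCovers ρ, numChains k α μ =
      ∑ β ∈ lowerCovers α, numChains k β ρ + k * numChains (k - 1) α ρ := by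
  induction k generalizing ρ with
  | zero => simp [numChains_zero]
  | succ k ih =>
    have hprev : k * ∑ σ ∈ lowerCovers ρ, numChains (k - 1) α σ = k * numChains k α ρ := by
      cases k <;> simp [numChains_succ]
    simp only [numChains_succ, sum_upperCovers_sum_lowerCovers, ih, sum_add_distrib, ← mul_sum,
      hprev, Nat.add_sub_cancel]
    rw [sum_comm]
    ring

theorem sum_ofCard_succ_sum_lowerCovers (m : ℕ) (g : YoungDiagram → YoungDiagram → ℕ) :
    ∑ ν ∈ ofCard (m + 1), ∑ σ ∈ lowerCovers ν, g ν σ =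
      ∑ σ ∈ ofCard m, ∑ ν ∈ upperCovers σ, g ν σ := by
  refine sum_comm' fun ν σ => ?_
  simp only [mem_ofCard, mem_lowerCovers, mem_upperCovers]
  exact ⟨fun ⟨hν, hσν⟩ => ⟨hσν, by have := hσν.2; omega⟩,
    fun ⟨hσν, hσ⟩ => ⟨by have := hσν.2; omega, hσν⟩⟩

def numChainsFrom (k : ℕ) (α : YoungDiagram) : ℕ :=
  ∑ μ ∈ ofCard (α.card + k), numChains k α μ

theorem numChainsFrom_zero (α : YoungDiagram) : numChainsFrom 0 α = 1 := by
  simp [numChainsFrom, numChains_zero]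

theorem sum_card_lowerCovers_mul_numChains (k : ℕ) (α : YoungDiagram) :
    ∑ ν ∈ ofCard (α.card + k), #(lowerCovers ν) * numChains k α ν =
      ∑ β ∈ lowerCovers α, numChainsFrom k β + k * numChainsFrom (k - 1) α := by
  cases k with
  | zero => simp [numChainsFrom, numChains_zero]
  | succ k =>
    have hβ : ∀ β ∈ lowerCovers α, numChainsFrom (k + 1) β =
        ∑ σ ∈ ofCard (α.card + k), numChains (k + 1) β σ := fun β hβ => by
      rw [numChainsFrom, (mem_lowerCovers.1 hβ).2]
      congr 2
      omega
    calc ∑ ν ∈ ofCard (α.card + k + 1), #(lowerCovers ν) * numChains (k + 1) α ν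
        = ∑ ν ∈ ofCard (α.card + k + 1), ∑ σ ∈ lowerCovers ν, numChains (k + 1) α ν := by
          simp only [sum_const, smul_eq_mul]
      _ = ∑ σ ∈ ofCard (α.card + k), ∑ ν ∈ upperCovers σ, numChains (k + 1) α ν :=
          sum_ofCard_succ_sum_lowerCovers ..
      _ = ∑ σ ∈ ofCard (α.card + k),
            (∑ β ∈ lowerCovers α, numChains (k + 1) β σ + (k + 1) * numChains k α σ) := by
          simp only [sum_numChains_upperCovers, Nat.add_sub_cancel]
      _ = ∑ β ∈ lowerCovers α, numChainsFrom (k + 1) β + (k + 1) * numChainsFrom k α := by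
          rw [sum_add_distrib, sum_comm, ← mul_sum, sum_congr rfl hβ]
          rfl

theorem numChainsFrom_succ (k : ℕ) (α : YoungDiagram) :
    numChainsFrom (k + 1) α =
      numChainsFrom k α + ∑ β ∈ lowerCovers α, numChainsFrom k β +
        k * numChainsFrom (k - 1) α := by
  rw [add_assoc, ← sum_card_lowerCovers_mul_numChains]
  simp only [numChainsFrom, numChains_succ, ← add_assoc, sum_ofCard_succ_sum_lowerCovers,
    sum_const, smul_eq_mul, card_upperCovers, add_mul, one_mul, sum_add_distrib, add_comm]

theorem NN_eq_numChainsFrom {n : ℕ} {α : YoungDiagram} (h : α.card ≤ n) :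
    NN n α = numChainsFrom (n - α.card) α := by
  rw [NN, ← (finite_setOf_card_eq n).coe_toFinset, finsum_mem_coe_finset, numChainsFrom,
    Nat.add_sub_cancel' h]
  refine sum_congr rfl fun μ hμ => ?_
  rw [← (finite_setOf_card_eq n).mem_toFinset.1 hμ]
  rfl

theorem cells_rowYD (k : ℕ) : (rowYD k).cells = {0} ×ˢ range k := by
  ext ⟨i, j⟩
  simp [rowYD, mem_ofRowLens, eq_comm (a := 0), and_comm]

theorem card_rowYD (k : ℕ) : (rowYD k).card = k := by
  simp [YoungDiagram.card, cells_rowYD]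

theorem lowerCovers_rowYD_succ (k : ℕ) : lowerCovers (rowYD (k + 1)) = {rowYD k} := by
  ext ρ
  rw [mem_lowerCovers, mem_singleton]
  constructor
  · rintro ⟨hle, hcard⟩
    rw [card_rowYD] at hcard
    have hrow : ρ.cells = ρ.row 0 := by
      refine (filter_true_of_mem fun c hc => ?_).symm
      have := cells_subset_iff.2 hle hc
      simp only [cells_rowYD, mem_product, mem_singleton] at this
      exact this.1
    have hlen : ρ.rowLen 0 = k := by
      rw [rowLen_eq_card, ← hrow]
      exact (Nat.add_right_cancel hcard).symm
    exact YoungDiagram.ext (by rw [hrow, row_eq_prod, hlen, cells_rowYD])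
  · rintro rfl
    refine ⟨cells_subset_iff.1 ?_, by simp [card_rowYD]⟩
    simp only [cells_rowYD]
    exact product_subset_product_right (range_subset_range.2 k.le_succ)

theorem numChainsFrom_succ_rowYD_zero (k : ℕ) :
    numChainsFrom (k + 1) (rowYD 0) =
      numChainsFrom k (rowYD 0) + k * numChainsFrom (k - 1) (rowYD 0) := by
  rw [numChainsFrom_succ, lowerCovers_eq_empty_of_card_eq_zero (card_rowYD 0), sum_empty, add_zero]

theorem numChainsFrom_succ_rowYD_succ (k a : ℕ) :
    numChainsFrom (k + 1) (rowYD (a + 1)) = numChainsFrom k (rowYD (a + 1)) +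
      numChainsFrom k (rowYD a) + k * numChainsFrom (k - 1) (rowYD (a + 1)) := by
  rw [numChainsFrom_succ, lowerCovers_rowYD_succ, sum_singleton]

end YoungDiagram

end

open YoungDiagram

theorem numChainsFrom_rowYD_zero (k : ℕ) : numChainsFrom k (rowYD 0) = invol k := by
  induction k using Nat.twoStepInduction with
  | zero => rw [numChainsFrom_zero, invol_zero]
  | one => rw [numChainsFrom_succ_rowYD_zero, numChainsFrom_zero, invol_one]
  | more k ih₀ ih₁ =>
    rw [numChainsFrom_succ_rowYD_zero, ih₁, Nat.add_sub_cancel, ih₀, invol_add_two]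

theorem numChainsFrom_rowYD_one (k : ℕ) : numChainsFrom k (rowYD 1) = invol (k + 1) := by
  induction k using Nat.twoStepInduction with
  | zero => rw [numChainsFrom_zero, invol_one]
  | one =>
    rw [numChainsFrom_succ_rowYD_succ, numChainsFrom_zero, numChainsFrom_zero, invol_add_two,
      invol_one, invol_zero]
  | more k ih₀ ih₁ =>
    rw [numChainsFrom_succ_rowYD_succ, ih₁, numChainsFrom_rowYD_zero, Nat.add_sub_cancel, ih₀,
      invol_add_two (k + 1)]
    ring

theorem two_mul_numChainsFrom_rowYD_two (k : ℕ) :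
    2 * numChainsFrom k (rowYD 2) = invol (k + 2) := by
  induction k using Nat.twoStepInduction with
  | zero => rw [numChainsFrom_zero, invol_add_two, invol_one, invol_zero]
  | one =>
    rw [numChainsFrom_succ_rowYD_succ, numChainsFrom_zero, numChainsFrom_zero, invol_add_two,
      invol_add_two, invol_one, invol_zero]
  | more k ih₀ ih₁ =>
    rw [numChainsFrom_succ_rowYD_succ, Nat.add_sub_cancel, invol_add_two (k + 2)]
    have := numChainsFrom_rowYD_one (k + 1)
    linear_combination ih₁ + 2 * this + (k + 1) * ih₀

theorem six_mul_numChainsFrom_rowYD_three (k : ℕ) :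
    6 * numChainsFrom k (rowYD 3) = invol (k + 3) + 2 * invol k := by
  induction k using Nat.twoStepInduction with
  | zero => simp [numChainsFrom_zero, invol_add_two, invol_one, invol_zero]
  | one =>
    simp [numChainsFrom_succ_rowYD_succ, numChainsFrom_zero, invol_add_two, invol_one,
      invol_zero]
  | more k ih₀ ih₁ =>
    rw [numChainsFrom_succ_rowYD_succ, Nat.add_sub_cancel, invol_add_two (k + 3),
      invol_add_two k]
    have := two_mul_numChainsFrom_rowYD_two (k + 1)
    linear_combination ih₁ + 3 * this + (k + 1) * ih₀

/-- For `n ≥ 3`, `N(n;(3)) = (1/6)(t_n + 2·t_{n−3})`. -/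
theorem stmt2 (n : ℕ) (hn : 3 ≤ n) :
    (NN n (rowYD 3) : ℚ) = (1 / 6) * ((invol n : ℚ) + 2 * invol (n - 3)) := by
  have hNN : NN n (rowYD 3) = numChainsFrom (n - 3) (rowYD 3) := by
    rw [NN_eq_numChainsFrom (by rwa [card_rowYD]), card_rowYD]
  have h := six_mul_numChainsFrom_rowYD_three (n - 3)
  rw [Nat.sub_add_cancel hn, ← hNN] at h
  have hℚ : (6 : ℚ) * NN n (rowYD 3) = invol n + 2 * invol (n - 3) := by exact_mod_cast h
  linarith
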